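/- Let X ⊆ ℝⁿ be a polyhedral set and ψ(x) = max_{1≤i≤k₁} ψ₁ᵢ(x) − max_{1≤j≤k₂} ψ₂ⱼ(x), where the ψ₁ᵢ are convex quadratic functions and the ψ₂ⱼ are concave quadratic functions. Then the set ψ(D_{(ψ,X)}) of d-stationary values of ψ on X is finite. -/

import Mathlib

open Matrix Filter Topology

noncomputable def finMax {k : ℕ} (hk : 0 < k) (g : Fin k → ℝ) : ℝ :=
  Finset.univ.sup' (Finset.univ_nonempty_iff.mpr ⟨⟨0, hk⟩⟩) g

/-- The one-sided directional derivative of `ψ` at `x` in direction `v` equals `L`. -/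
def HasDirDeriv {n : ℕ} (ψ : (Fin n → ℝ) → ℝ) (x v : Fin n → ℝ) (L : ℝ) : Prop :=
  Filter.Tendsto (fun δ : ℝ => (ψ (x + δ • v) - ψ x) / δ) (nhdsWithin 0 (Set.Ioi 0)) (nhds L)

/-- `x₀` is a d(irectional)-stationary point of `ψ` on `X`. -/
def DStat {n : ℕ} (ψ : (Fin n → ℝ) → ℝ) (X : Set (Fin n → ℝ)) (x₀ : Fin n → ℝ) : Prop :=
  x₀ ∈ X ∧ ∀ x ∈ X, ∃ L, HasDirDeriv ψ x₀ (x - x₀) L ∧ 0 ≤ L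


/-- A polyhedral subset of ℝⁿ: solution set of finitely many linear inequalities. -/
def IsPolyhedral {n : ℕ} (X : Set (Fin n → ℝ)) : Prop :=
  ∃ (m : ℕ) (A : Fin m → Fin n → ℝ) (b : Fin m → ℝ), X = {x | ∀ i, A i ⬝ᵥ x ≤ b i}

/-!
At a d-stationary point `x`, pick an index `j` active in `F₂ = maxⱼ ψ₂ⱼ`. Since `F₁ = maxᵢ ψ₁ᵢ` is
convex and `ψ₂ⱼ ≤ F₂` with equality at `x`, nonnegativity of `ψ'(x; z - x)` yields
`F₁ z ≥ F₁ x + ∇ψ₂ⱼ(x) ⬝ (z - x)` for all `z ∈ X`. If `y` is another d-stationary point with the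
same active index, adding the two inequalities gives `(y - x) ⬝ (-Q₂ⱼ)(y - x) ≤ 0`, hence
`Q₂ⱼ (y - x) = 0` as `-Q₂ⱼ ⪰ 0`. Then `ψ₂ⱼ` is affine along the segment, both inequalities are
equalities, and `ψ x = ψ y`. So `ψ` takes at most `k₂` d-stationary values.
-/

open Set

theorem ConvexOn.finset_sup' {𝕜 E β ι : Type*} [Semiring 𝕜] [PartialOrder 𝕜] [AddCommMonoid E]
    [AddCommMonoid β] [LinearOrder β] [IsOrderedAddMonoid β] [SMul 𝕜 E] [Module 𝕜 β]
    [PosSMulStrictMono 𝕜 β] {s : Set E} {t : Finset ι} (ht : t.Nonempty) {f : ι → E → β}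
    (hf : ∀ i ∈ t, ConvexOn 𝕜 s (f i)) : ConvexOn 𝕜 s (fun x => t.sup' ht (fun i => f i x)) := by
  convert Finset.sup'_induction ht f (p := ConvexOn 𝕜 s) (fun _ h₁ _ h₂ => h₁.sup h₂) hf
  exact (Finset.sup'_apply ht f _).symm

section Quadratic

variable {m : Type*} [Fintype m]

noncomputable def quadratic (Q : Matrix m m ℝ) (q : m → ℝ) (α : ℝ) (x : m → ℝ) : ℝ :=
  (1 / 2) * (x ⬝ᵥ Q *ᵥ x) + q ⬝ᵥ x + α

variable {Q : Matrix m m ℝ} (q : m → ℝ) (α : ℝ)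

theorem quadratic_add_smul (hQ : Q.IsHermitian) (x v : m → ℝ) (t : ℝ) :
    quadratic Q q α (x + t • v) =
      quadratic Q q α x + t * ((Q *ᵥ x + q) ⬝ᵥ v) + t ^ 2 * ((1 / 2) * (v ⬝ᵥ Q *ᵥ v)) := by
  have hsymm : v ⬝ᵥ Q *ᵥ x = x ⬝ᵥ Q *ᵥ v := by
    have hQt : Qᵀ = Q := by rw [← conjTranspose_eq_transpose_of_trivial, hQ.eq]
    conv_lhs => rw [dotProduct_mulVec, ← hQt, vecMul_transpose, dotProduct_comm]
  simp only [quadratic, mulVec_add, mulVec_smul, dotProduct_add, add_dotProduct, dotProduct_smul,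
    smul_dotProduct, smul_eq_mul, dotProduct_comm (Q *ᵥ x) v, hsymm]
  ring

theorem convexOn_quadratic (hQ : Q.PosSemidef) : ConvexOn ℝ univ (quadratic Q q α) := by
  refine ⟨convex_univ, fun x _ y _ a b ha hb hab => ?_⟩
  obtain rfl : a = 1 - b := by linarith
  have hxy : (1 - b) • x + b • y = x + b • (y - x) := by module
  have hy := quadratic_add_smul q α hQ.isHermitian x (y - x) 1
  have hc : 0 ≤ (y - x) ⬝ᵥ Q *ᵥ (y - x) := by
    simpa using hQ.dotProduct_mulVec_nonneg (y - x)
  rw [one_smul, add_sub_cancel] at hy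
  rw [hxy, quadratic_add_smul q α hQ.isHermitian, smul_eq_mul, smul_eq_mul, hy]
  nlinarith [mul_nonneg (mul_nonneg ha hb) hc]

theorem sub_quadratic_eq_of_gradient_le (hQ : (-Q).PosSemidef) {F : (m → ℝ) → ℝ} {x y : m → ℝ}
    (hxy : F x + (Q *ᵥ x + q) ⬝ᵥ (y - x) ≤ F y) (hyx : F y + (Q *ᵥ y + q) ⬝ᵥ (x - y) ≤ F x) :
    F x - quadratic Q q α x = F y - quadratic Q q α y := by
  set w := y - x with hw
  have hQw : Q *ᵥ w = 0 := by
    have hle : w ⬝ᵥ (-Q) *ᵥ w ≤ 0 := by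
      have : (Q *ᵥ y + q) ⬝ᵥ (x - y) = -((Q *ᵥ x + q) ⬝ᵥ w) + w ⬝ᵥ (-Q) *ᵥ w := by
        rw [hw, neg_mulVec, mulVec_sub]
        simp only [dotProduct_comm _ (y - x), ← neg_sub y x, dotProduct_neg, dotProduct_add,
          dotProduct_sub]
        ring
      linarith
    have hge : 0 ≤ w ⬝ᵥ (-Q) *ᵥ w := by simpa using hQ.dotProduct_mulVec_nonneg w
    have := (hQ.dotProduct_mulVec_zero_iff w).mp (by simpa using le_antisymm hle hge)
    rwa [neg_mulVec, neg_eq_zero] at this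
  have hgrad : Q *ᵥ y = Q *ᵥ x := by
    rw [← sub_eq_zero, ← mulVec_sub, ← hw, hQw]
  have hval : quadratic Q q α y = quadratic Q q α x + (Q *ᵥ x + q) ⬝ᵥ w := by
    have hQ' : Q.IsHermitian := isHermitian_neg_iff.mp hQ.isHermitian
    have := quadratic_add_smul q α hQ' x w 1
    rwa [one_smul, hw, add_sub_cancel, ← hw, hQw, dotProduct_zero, one_mul, mul_zero, mul_zero,
      add_zero] at this
  rw [hgrad, ← neg_sub y x, ← hw, dotProduct_neg] at hyx
  linarith

end Quadratic

theorem hasDirDeriv_quadratic {n : ℕ} {Q : Matrix (Fin n) (Fin n) ℝ} (q : Fin n → ℝ) (α : ℝ)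
    (hQ : Q.IsHermitian) (x v : Fin n → ℝ) :
    HasDirDeriv (quadratic Q q α) x v ((Q *ᵥ x + q) ⬝ᵥ v) := by
  have hlin : Tendsto (fun δ : ℝ => (Q *ᵥ x + q) ⬝ᵥ v + δ * ((1 / 2) * (v ⬝ᵥ Q *ᵥ v)))
      (𝓝[>] 0) (𝓝 ((Q *ᵥ x + q) ⬝ᵥ v)) := by
    have hc : Continuous fun δ : ℝ => (Q *ᵥ x + q) ⬝ᵥ v + δ * ((1 / 2) * (v ⬝ᵥ Q *ᵥ v)) := by
      fun_prop
    simpa using tendsto_nhdsWithin_of_tendsto_nhds (hc.tendsto 0)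
  refine hlin.congr' (eventually_nhdsWithin_of_forall fun δ (hδ : 0 < δ) => ?_)
  show _ = (quadratic Q q α (x + δ • v) - quadratic Q q α x) / δ
  rw [quadratic_add_smul q α hQ]
  field_simp
  ring

theorem HasDirDeriv.add_le_of_convexOn_sub {n : ℕ} {F G g : (Fin n → ℝ) → ℝ} {x v : Fin n → ℝ}
    {L D : ℝ} (hψ : HasDirDeriv (fun y => F y - G y) x v L) (hL : 0 ≤ L)
    (hF : ConvexOn ℝ univ F) (hgG : ∀ y, g y ≤ G y) (hgx : g x = G x) (hg : HasDirDeriv g x v D) :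
    F x + D ≤ F (x + v) := by
  have hquot : ∀ᶠ δ in 𝓝[>] 0, (F (x + δ • v) - G (x + δ • v) - (F x - G x)) / δ
      ≤ F (x + v) - F x - (g (x + δ • v) - g x) / δ := by
    filter_upwards [Ioo_mem_nhdsGT one_pos] with δ ⟨hδ₀, hδ₁⟩
    have hconv : F (x + δ • v) ≤ (1 - δ) * F x + δ * F (x + v) := by
      have := hF.2 (mem_univ x) (mem_univ (x + v)) (by linarith) hδ₀.le (sub_add_cancel 1 δ)
      rwa [show (1 - δ) • x + δ • (x + v) = x + δ • v by module] at this
    rw [div_le_iff₀ hδ₀, sub_mul, div_mul_cancel₀ _ hδ₀.ne']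
    linarith [hgG (x + δ • v)]
  linarith [le_of_tendsto_of_tendsto hψ (tendsto_const_nhds.sub hg) hquot]

theorem Set.finite_image_of_constant_on_cover {α β ι : Type*} [Finite ι] {S : Set α} {f : α → β}
    {p : ι → α → Prop} (hp : ∀ x ∈ S, ∃ j, p j x)
    (hf : ∀ j, ∀ x ∈ S, ∀ y ∈ S, p j x → p j y → f x = f y) : (f '' S).Finite := by
  refine (finite_iUnion fun j => (?_ : (f '' {x ∈ S | p j x}).Subsingleton).finite).subset ?_
  · rintro _ ⟨x, ⟨hx, hjx⟩, rfl⟩ _ ⟨y, ⟨hy, hjy⟩, rfl⟩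
    exact hf j x hx y hy hjx hjy
  · rintro _ ⟨x, hx, rfl⟩
    obtain ⟨j, hj⟩ := hp x hx
    exact mem_iUnion.mpr ⟨j, x, ⟨hx, hj⟩, rfl⟩

theorem exists_eq_finMax {k : ℕ} (hk : 0 < k) (g : Fin k → ℝ) : ∃ j, g j = finMax hk g := by
  obtain ⟨j, -, hj⟩ := Finset.exists_mem_eq_sup' (Finset.univ_nonempty_iff.mpr ⟨⟨0, hk⟩⟩) g
  exact ⟨j, hj.symm⟩

theorem le_finMax {k : ℕ} (hk : 0 < k) (g : Fin k → ℝ) (j : Fin k) : g j ≤ finMax hk g :=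
  Finset.le_sup' g (Finset.mem_univ j)

theorem stmt_12_general {n k₁ k₂ : ℕ} (hk₁ : 0 < k₁) (hk₂ : 0 < k₂)
    (X : Set (Fin n → ℝ))
    (Q₁ : Fin k₁ → Matrix (Fin n) (Fin n) ℝ) (q₁ : Fin k₁ → Fin n → ℝ) (α₁ : Fin k₁ → ℝ)
    (hQ₁ : ∀ i, (Q₁ i).PosSemidef)
    (Q₂ : Fin k₂ → Matrix (Fin n) (Fin n) ℝ) (q₂ : Fin k₂ → Fin n → ℝ) (α₂ : Fin k₂ → ℝ)
    (hQ₂ : ∀ j, (-(Q₂ j)).PosSemidef)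
    (ψ₁ : Fin k₁ → (Fin n → ℝ) → ℝ)
    (hψ₁ : ∀ i x, ψ₁ i x = (1/2) * (x ⬝ᵥ (Q₁ i).mulVec x) + q₁ i ⬝ᵥ x + α₁ i)
    (ψ₂ : Fin k₂ → (Fin n → ℝ) → ℝ)
    (hψ₂ : ∀ j x, ψ₂ j x = (1/2) * (x ⬝ᵥ (Q₂ j).mulVec x) + q₂ j ⬝ᵥ x + α₂ j)
    (ψ : (Fin n → ℝ) → ℝ)
    (hψ : ∀ x, ψ x = finMax hk₁ (fun i => ψ₁ i x) - finMax hk₂ (fun j => ψ₂ j x)) :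
    (ψ '' {x | DStat ψ X x}).Finite := by
  obtain rfl : ψ₁ = fun i => quadratic (Q₁ i) (q₁ i) (α₁ i) := funext fun i => funext (hψ₁ i)
  obtain rfl : ψ₂ = fun j => quadratic (Q₂ j) (q₂ j) (α₂ j) := funext fun j => funext (hψ₂ j)
  set F₁ := fun x => finMax hk₁ (fun i => quadratic (Q₁ i) (q₁ i) (α₁ i) x)
  set F₂ := fun x => finMax hk₂ (fun j => quadratic (Q₂ j) (q₂ j) (α₂ j) x)
  have hF₁ : ConvexOn ℝ univ F₁ :=
    ConvexOn.finset_sup' _ fun i _ => convexOn_quadratic (q₁ i) (α₁ i) (hQ₁ i)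
  have hstat : ∀ x, DStat ψ X x → ∀ j, quadratic (Q₂ j) (q₂ j) (α₂ j) x = F₂ x →
      ∀ z ∈ X, F₁ x + (Q₂ j *ᵥ x + q₂ j) ⬝ᵥ (z - x) ≤ F₁ z := by
    rintro x ⟨-, hx⟩ j hj z hz
    obtain ⟨L, hL, hL₀⟩ := hx z hz
    rw [show ψ = fun x => F₁ x - F₂ x from funext hψ] at hL
    have hQ₂j : (Q₂ j).IsHermitian := isHermitian_neg_iff.mp (hQ₂ j).isHermitian
    simpa using hL.add_le_of_convexOn_sub hL₀ hF₁ (fun y => le_finMax hk₂ _ j) hj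
      (hasDirDeriv_quadratic (q₂ j) (α₂ j) hQ₂j x (z - x))
  refine Set.finite_image_of_constant_on_cover
    (p := fun j x => quadratic (Q₂ j) (q₂ j) (α₂ j) x = F₂ x)
    (fun x _ => exists_eq_finMax hk₂ _) fun j x hx y hy hjx hjy => ?_
  rw [hψ, hψ]
  change F₁ x - F₂ x = F₁ y - F₂ y
  rw [← hjx, ← hjy]
  exact sub_quadratic_eq_of_gradient_le (q₂ j) (α₂ j) (hQ₂ j) (hstat x hx j hjx y hy.1)
    (hstat y hy j hjy x hx.1)

/-- Proposition 9(a): for `ψ = max_i ψ₁ᵢ - max_j ψ₂ⱼ` with the `ψ₁ᵢ` convex quadratic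
(positive semidefinite Hessians) and the `ψ₂ⱼ` concave quadratic (negative semidefinite
Hessians), the set of d-stationary values of `ψ` on a polyhedral set `X` is finite. -/
theorem stmt_12 {n k₁ k₂ : ℕ} (hk₁ : 0 < k₁) (hk₂ : 0 < k₂)
    (X : Set (Fin n → ℝ)) (hX : IsPolyhedral X)
    (Q₁ : Fin k₁ → Matrix (Fin n) (Fin n) ℝ) (q₁ : Fin k₁ → Fin n → ℝ) (α₁ : Fin k₁ → ℝ)
    (hQ₁ : ∀ i, (Q₁ i).PosSemidef)
    (Q₂ : Fin k₂ → Matrix (Fin n) (Fin n) ℝ) (q₂ : Fin k₂ → Fin n → ℝ) (α₂ : Fin k₂ → ℝ)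
    (hQ₂ : ∀ j, (-(Q₂ j)).PosSemidef)
    (ψ₁ : Fin k₁ → (Fin n → ℝ) → ℝ)
    (hψ₁ : ∀ i x, ψ₁ i x = (1/2) * (x ⬝ᵥ (Q₁ i).mulVec x) + q₁ i ⬝ᵥ x + α₁ i)
    (ψ₂ : Fin k₂ → (Fin n → ℝ) → ℝ)
    (hψ₂ : ∀ j x, ψ₂ j x = (1/2) * (x ⬝ᵥ (Q₂ j).mulVec x) + q₂ j ⬝ᵥ x + α₂ j)
    (ψ : (Fin n → ℝ) → ℝ)
    (hψ : ∀ x, ψ x = finMax hk₁ (fun i => ψ₁ i x) - finMax hk₂ (fun j => ψ₂ j x)) :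
    (ψ '' {x | DStat ψ X x}).Finite :=
  stmt_12_general hk₁ hk₂ X Q₁ q₁ α₁ hQ₁ Q₂ q₂ α₂ hQ₂ ψ₁ hψ₁ ψ₂ hψ₂ ψ hψ
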